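/- Let A be an m-dimensional abstract rigidity matroid on K(V). Then every set H = K(V₁) ∪ K(V₂) with V₁ ∪ V₂ = V, |V₁ ∩ V₂| = m−1, and V₁, V₂ incomparable under inclusion, is a hyperplane of A. -/

import Mathlib

open Matroid Set

/-- A circuit of a matroid: a minimal dependent set. -/
def Matroid.IsCircuit' {α : Type*} (M : Matroid α) (C : Set α) : Prop :=
  M.Dep C ∧ ∀ D, D ⊂ C → M.Indep D

/-- A cocircuit: a circuit of the dual matroid. -/
def Matroid.IsCocircuit' {α : Type*} (M : Matroid α) (C : Set α) : Prop :=
  M✶.IsCircuit' C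

/-- A hyperplane: a maximal subset of the ground set not containing a basis. -/
def Matroid.IsHyperplane {α : Type*} (M : Matroid α) (H : Set α) : Prop :=
  H ⊆ M.E ∧ (¬ ∃ B ⊆ H, M.IsBase B) ∧
    ∀ H', H ⊂ H' → H' ⊆ M.E → ∃ B ⊆ H', M.IsBase B

/-- The rank of a set: the size of a largest independent subset. -/
noncomputable def Matroid.rk {α : Type*} (M : Matroid α) (X : Set α) : ℕ :=
  sSup {n | ∃ I ⊆ X, M.Indep I ∧ I.ncard = n}

/-- `cK U` is the edge set of the complete graph on the vertex set `U`. -/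
def cK {V : Type*} (U : Set V) : Set (Sym2 V) :=
  {e | ¬ e.IsDiag ∧ ∀ v ∈ e, v ∈ U}

/-- The support (set of endpoints) of an edge set. -/
def supp {V : Type*} (E : Set (Sym2 V)) : Set V := {v | ∃ e ∈ E, v ∈ e}

/-- An edge set is rigid if its closure is the complete graph on its support. -/
def Rigid {V : Type*} (A : Matroid (Sym2 V)) (E : Set (Sym2 V)) : Prop :=
  A.closure E = cK (supp E)

/-- `A` is an `m`-dimensional abstract rigidity matroid on `K(W)`. -/
def IsARMOn {V : Type*} (m : ℕ) (W : Set V) (A : Matroid (Sym2 V)) : Prop :=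
  A.E = cK W ∧
  (∀ E F : Set (Sym2 V), E ⊆ cK W → F ⊆ cK W →
    (supp E ∩ supp F).ncard < m →
    A.closure (E ∪ F) ⊆ cK (supp E) ∪ cK (supp F)) ∧
  (∀ E F : Set (Sym2 V), E ⊆ cK W → F ⊆ cK W →
    Rigid A E → Rigid A F → m ≤ (supp E ∩ supp F).ncard →
    Rigid A (E ∪ F))

/-- The star of a vertex: all edges containing it. -/
def starv {V : Type*} (v : V) : Set (Sym2 V) := {e | ¬ e.IsDiag ∧ v ∈ e}

/-- `C` is a vertex star minus `m-1` edges. -/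
def IsStarMinus {V : Type*} (m : ℕ) (C : Set (Sym2 V)) : Prop :=
  ∃ v : V, ∃ D ⊆ starv v, D.ncard = m - 1 ∧ C = starv v \ D

/-- The valence (degree) of a vertex in an edge set. -/
noncomputable def valence {V : Type*} (C : Set (Sym2 V)) (v : V) : ℕ :=
  {e ∈ C | v ∈ e}.ncard

/-- `bigstar V' = K(V) \ K(V \ V')`. -/
def bigstar {V : Type*} (V' : Set V) : Set (Sym2 V) :=
  cK (univ : Set V) \ cK (V'ᶜ)

/-- The family `H_m(V)` of unions of two complete graphs covering `V` and
meeting in `m-1` vertices. -/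
def HmFam (m : ℕ) (V : Type*) : Set (Set (Sym2 V)) :=
  {H | ∃ V₁ V₂ : Set V, V₁ ∪ V₂ = univ ∧ (V₁ ∩ V₂).ncard = m - 1 ∧
    ¬ V₁ ⊆ V₂ ∧ ¬ V₂ ⊆ V₁ ∧ H = cK V₁ ∪ cK V₂}

/-- The family `H_m^{(1)}(K(X))` of sets `Δ_v^A` relative to a vertex set `X`. -/
def Hm1Fam {V : Type*} (m : ℕ) (X : Set V) : Set (Set (Sym2 V)) :=
  {H | ∃ v ∈ X, ∃ A ⊆ X \ {v}, A.ncard = m - 1 ∧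
    H = cK ({v} ∪ A) ∪ cK (X \ {v})}

/-!
Since `|V₁ ∩ V₂| = m - 1 < m`, axiom (C1) makes `H = K(V₁) ∪ K(V₂)` closed, and `H` misses
every edge `uw` with `u ∈ V₁ \ V₂`, `w ∈ V₂ \ V₁`, so `H` is a proper flat. Adding such an edge
to `H` completes the graph on `S = (V₁ ∩ V₂) ∪ {u, w}`. Gluing `K(S)` to `K(V₁)` along the `m`
vertices `(V₁ ∩ V₂) ∪ {u}`, and then `K(V₁ ∪ S)` to `K(V₂)` along the `m` vertices
`(V₁ ∩ V₂) ∪ {w}`, axiom (C2) shows that `H + uw` spans `K(V)`. Hence `H` is a hyperplane.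
-/

lemma Matroid.isHyperplane_of_closure_eq {α : Type*} {M : Matroid α} {H : Set α}
    (hcl : M.closure H = H) (hHE : H ⊂ M.E)
    (hspan : ∀ e ∈ M.E \ H, M.Spanning (insert e H)) : M.IsHyperplane H := by
  refine ⟨hHE.subset, ?_, fun H' hHH' hH'E => ?_⟩
  · rintro ⟨B, hBH, hB⟩
    refine hHE.not_subset ?_
    rw [← hB.closure_eq, ← hcl]
    exact M.closure_subset_closure hBH
  · obtain ⟨e, heH', heH⟩ := exists_of_ssubset hHH'
    obtain ⟨B, hB, hBH'⟩ :=
      ((hspan e ⟨hH'E heH', heH⟩).superset (insert_subset heH' hHH'.subset)).exists_isBase_subset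
    exact ⟨B, hBH', hB⟩

section CompleteGraph

variable {V : Type*}

lemma cK_mono {U U' : Set V} (h : U ⊆ U') : cK U ⊆ cK U' :=
  fun _ he => ⟨he.1, fun v hv => h (he.2 v hv)⟩

lemma cK_empty : cK (∅ : Set V) = ∅ :=
  eq_empty_of_forall_notMem fun e he => he.2 _ (Sym2.out_fst_mem e)

lemma mk_mem_cK {U : Set V} {a b : V} (hab : a ≠ b) (ha : a ∈ U) (hb : b ∈ U) :
    s(a, b) ∈ cK U := by
  refine ⟨by simpa [Sym2.mk_isDiag_iff] using hab, fun v hv => ?_⟩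
  rcases Sym2.mem_iff.1 hv with rfl | rfl <;> assumption

lemma supp_empty : supp (∅ : Set (Sym2 V)) = ∅ := by
  simp [supp]

lemma supp_union (E F : Set (Sym2 V)) : supp (E ∪ F) = supp E ∪ supp F := by
  ext v
  simp [supp, or_and_right, exists_or]

lemma supp_cK_subset (U : Set V) : supp (cK U) ⊆ U := by
  rintro v ⟨e, he, hv⟩
  exact he.2 v hv

lemma cK_supp_cK (U : Set V) : cK (supp (cK U)) = cK U :=
  (cK_mono (supp_cK_subset U)).antisymm fun e he => ⟨he.1, fun _ hv => ⟨e, he, hv⟩⟩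

lemma supp_cK_of_nontrivial {U : Set V} (hU : U.Nontrivial) : supp (cK U) = U := by
  refine (supp_cK_subset U).antisymm fun v hv => ?_
  obtain ⟨a, ha, hav⟩ := hU.exists_ne v
  exact ⟨s(v, a), mk_mem_cK hav.symm hv ha, Sym2.mem_mk_left v a⟩

lemma cK_insert_insert_subset {u w : V} (huw : u ≠ w) (X : Set V) :
    cK (insert u (insert w X)) ⊆ insert s(u, w) (cK (insert u X) ∪ cK (insert w X)) := by
  rintro e ⟨hd, he⟩
  by_cases hwe : w ∈ e
  · by_cases hue : u ∈ e
    · exact Or.inl ((Sym2.mem_and_mem_iff huw).1 ⟨hue, hwe⟩)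
    · refine Or.inr (Or.inr ⟨hd, fun v hv => ?_⟩)
      exact (mem_insert_iff.1 (he v hv)).resolve_left (ne_of_mem_of_not_mem hv hue)
  · refine Or.inr (Or.inl ⟨hd, fun v hv => ?_⟩)
    rw [insert_comm] at he
    exact (mem_insert_iff.1 (he v hv)).resolve_left (ne_of_mem_of_not_mem hv hwe)

variable {V₁ V₂ : Set V}

lemma mk_notMem_cK_union {u w : V} (hu : u ∈ V₁ \ V₂) (hw : w ∈ V₂ \ V₁) :
    s(u, w) ∉ cK V₁ ∪ cK V₂ := by
  rintro (h | h)
  · exact hw.2 (h.2 w (Sym2.mem_mk_right u w))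
  · exact hu.2 (h.2 u (Sym2.mem_mk_left u w))

lemma exists_eq_mk_of_notMem_cK_union (hcover : V₁ ∪ V₂ = univ) {e : Sym2 V}
    (he : e ∈ cK univ) (heH : e ∉ cK V₁ ∪ cK V₂) :
    ∃ u ∈ V₁ \ V₂, ∃ w ∈ V₂ \ V₁, e = s(u, w) := by
  obtain ⟨a, b⟩ := e
  have hab : a ≠ b := by simpa [Sym2.mk_isDiag_iff] using he.1
  have hmem : ∀ x, x ∈ V₁ ∨ x ∈ V₂ := eq_univ_iff_forall.1 hcover
  have h₁ : a ∈ V₁ → b ∉ V₁ := fun ha hb => heH (Or.inl (mk_mem_cK hab ha hb))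
  have h₂ : a ∈ V₂ → b ∉ V₂ := fun ha hb => heH (Or.inr (mk_mem_cK hab ha hb))
  by_cases ha : a ∈ V₁
  · have hb := (hmem b).resolve_left (h₁ ha)
    exact ⟨a, ⟨ha, fun ha' => h₂ ha' hb⟩, b, ⟨hb, h₁ ha⟩, rfl⟩
  · have ha' := (hmem a).resolve_left ha
    exact ⟨b, ⟨(hmem b).resolve_right (h₂ ha'), h₂ ha'⟩, a, ⟨ha', ha⟩, Sym2.eq_swap⟩

end CompleteGraph

namespace IsARMOn

variable {V : Type*} {m : ℕ} {A : Matroid (Sym2 V)}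

lemma cK_subset_ground (hA : IsARMOn m univ A) (U : Set V) : cK U ⊆ A.E :=
  hA.1 ▸ cK_mono (subset_univ U)

lemma closure_cK (hA : IsARMOn m univ A) (hm : 0 < m) (U : Set V) :
    A.closure (cK U) = cK U := by
  have h := hA.2.1 (cK U) ∅ (cK_mono (subset_univ U)) (empty_subset _) (by simpa [supp_empty])
  rw [union_empty, supp_empty, cK_empty, union_empty, cK_supp_cK] at h
  exact h.antisymm (A.subset_closure _ (hA.cK_subset_ground U))

lemma rigid_cK (hA : IsARMOn m univ A) (hm : 0 < m) (U : Set V) : Rigid A (cK U) := by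
  rw [Rigid, cK_supp_cK]
  exact hA.closure_cK hm U

lemma closure_cK_union_cK_subset [Finite V] (hA : IsARMOn m univ A) {U₁ U₂ : Set V}
    (h : (U₁ ∩ U₂).ncard < m) : A.closure (cK U₁ ∪ cK U₂) ⊆ cK U₁ ∪ cK U₂ := by
  have hsupp : (supp (cK U₁) ∩ supp (cK U₂)).ncard < m :=
    (ncard_le_ncard (inter_subset_inter (supp_cK_subset U₁) (supp_cK_subset U₂))).trans_lt h
  simpa only [cK_supp_cK] using
    hA.2.1 (cK U₁) (cK U₂) (cK_mono (subset_univ _)) (cK_mono (subset_univ _)) hsupp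

lemma closure_cK_union_cK_of_subset (hA : IsARMOn m univ A) (hm : 0 < m) {U₁ U₂ : Set V}
    (h : U₁ ⊆ U₂) : A.closure (cK U₁ ∪ cK U₂) = cK (U₁ ∪ U₂) := by
  rw [union_eq_right.2 h, union_eq_right.2 (cK_mono h), hA.closure_cK hm]

lemma closure_cK_union_cK (hA : IsARMOn m univ A) (hm : 0 < m) {U₁ U₂ : Set V}
    (h : m ≤ (U₁ ∩ U₂).ncard) : A.closure (cK U₁ ∪ cK U₂) = cK (U₁ ∪ U₂) := by
  obtain ⟨x, hx₁, hx₂⟩ := nonempty_of_ncard_ne_zero (by omega : (U₁ ∩ U₂).ncard ≠ 0)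
  -- (C2) only sees `supp (cK U)`, which is `U` just when `|U| ≥ 2`; a smaller `U` meets the
  -- other set, hence lies inside it.
  by_cases hU₁ : U₁.Subsingleton
  · exact hA.closure_cK_union_cK_of_subset hm fun y hy => hU₁ hx₁ hy ▸ hx₂
  by_cases hU₂ : U₂.Subsingleton
  · rw [union_comm, union_comm U₁]
    exact hA.closure_cK_union_cK_of_subset hm fun y hy => hU₂ hx₂ hy ▸ hx₁
  rw [not_subsingleton_iff] at hU₁ hU₂
  have hrigid := hA.2.2 (cK U₁) (cK U₂) (cK_mono (subset_univ _)) (cK_mono (subset_univ _))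
    (hA.rigid_cK hm U₁) (hA.rigid_cK hm U₂)
    (by rwa [supp_cK_of_nontrivial hU₁, supp_cK_of_nontrivial hU₂])
  rwa [Rigid, supp_union, supp_cK_of_nontrivial hU₁, supp_cK_of_nontrivial hU₂] at hrigid

lemma spanning_insert_mk [Finite V] (hA : IsARMOn m univ A) (hm : 0 < m) {V₁ V₂ : Set V}
    (hcover : V₁ ∪ V₂ = univ) (hint : (V₁ ∩ V₂).ncard = m - 1) {u w : V}
    (hu : u ∈ V₁ \ V₂) (hw : w ∈ V₂ \ V₁) :
    A.Spanning (insert s(u, w) (cK V₁ ∪ cK V₂)) := by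
  set X := V₁ ∩ V₂
  set S := insert u (insert w X)
  set H := insert s(u, w) (cK V₁ ∪ cK V₂)
  have huw : u ≠ w := fun h => hu.2 (h ▸ hw.1)
  have hHE : H ⊆ A.E := insert_subset (hA.cK_subset_ground univ (mk_mem_cK huw trivial trivial))
    (union_subset (hA.cK_subset_ground V₁) (hA.cK_subset_ground V₂))
  have hcard : ∀ x ∉ X, m ≤ (insert x X).ncard := fun x hx => by
    rw [ncard_insert_of_notMem hx, hint]; omega
  have hSH : cK S ⊆ H := (cK_insert_insert_subset huw X).trans <| insert_subset_insert <|
    union_subset_union (cK_mono (insert_subset hu.1 inter_subset_left))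
      (cK_mono (insert_subset hw.1 inter_subset_right))
  have hV₁S : cK (V₁ ∪ S) ⊆ A.closure H := by
    have hglue : insert u X ⊆ V₁ ∩ S :=
      subset_inter (insert_subset hu.1 inter_subset_left) (insert_subset_insert (subset_insert _ _))
    rw [← hA.closure_cK_union_cK hm ((hcard u fun h => hu.2 h.2).trans (ncard_le_ncard hglue))]
    exact A.closure_subset_closure (union_subset (subset_union_left.trans (subset_insert _ _)) hSH)
  have hglue : insert w X ⊆ (V₁ ∪ S) ∩ V₂ :=
    subset_inter ((subset_insert _ _).trans subset_union_right)
      (insert_subset hw.1 inter_subset_right)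
  rw [spanning_iff_ground_subset_closure hHE, hA.1]
  calc cK univ = cK (V₁ ∪ S ∪ V₂) := by
        rw [union_right_comm, hcover, univ_union]
    _ = A.closure (cK (V₁ ∪ S) ∪ cK V₂) :=
        (hA.closure_cK_union_cK hm ((hcard w fun h => hw.2 h.1).trans (ncard_le_ncard hglue))).symm
    _ ⊆ A.closure (A.closure H) := A.closure_subset_closure <| union_subset hV₁S <|
        (subset_union_right.trans (subset_insert _ _)).trans (A.subset_closure H hHE)
    _ = A.closure H := A.closure_closure H

end IsARMOn

theorem stmt_15_general {V : Type*} [Fintype V] (m : ℕ) (hm : 0 < m)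
    (A : Matroid (Sym2 V)) (hA : IsARMOn m (univ : Set V) A)
    (V₁ V₂ : Set V) (hcover : V₁ ∪ V₂ = univ) (hint : (V₁ ∩ V₂).ncard = m - 1)
    (h12 : ¬ V₁ ⊆ V₂) (h21 : ¬ V₂ ⊆ V₁) :
    A.IsHyperplane (cK V₁ ∪ cK V₂) := by
  obtain ⟨u, hu⟩ := not_subset.mp h12
  obtain ⟨w, hw⟩ := not_subset.mp h21
  have hHE : cK V₁ ∪ cK V₂ ⊆ A.E :=
    union_subset (hA.cK_subset_ground V₁) (hA.cK_subset_ground V₂)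
  refine isHyperplane_of_closure_eq ?_ ?_ fun e he => ?_
  · exact (hA.closure_cK_union_cK_subset (by omega)).antisymm (A.subset_closure _ hHE)
  · refine (ssubset_iff_of_subset hHE).2 ⟨s(u, w), ?_, mk_notMem_cK_union hu hw⟩
    exact hA.cK_subset_ground univ (mk_mem_cK (fun h => hu.2 (h ▸ hw.1)) trivial trivial)
  · obtain ⟨a, ha, b, hb, rfl⟩ := exists_eq_mk_of_notMem_cK_union hcover (hA.1 ▸ he.1) he.2
    exact hA.spanning_insert_mk hm hcover hint ha hb

theorem stmt_15 {V : Type*} [Fintype V] [DecidableEq V] (m : ℕ) (hm : 0 < m)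
    (A : Matroid (Sym2 V)) (hA : IsARMOn m (univ : Set V) A)
    (hV : m + 1 ≤ Fintype.card V)
    (V₁ V₂ : Set V) (hcover : V₁ ∪ V₂ = univ) (hint : (V₁ ∩ V₂).ncard = m - 1)
    (h12 : ¬ V₁ ⊆ V₂) (h21 : ¬ V₂ ⊆ V₁) :
    A.IsHyperplane (cK V₁ ∪ cK V₂) :=
  stmt_15_general m hm A hA V₁ V₂ hcover hint h12 h21
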